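/- arXiv:2509.23971 — 2 statements merged into one kernel-verified Lean document; each statement's English description precedes it below -/
import Mathlib

section
/- Let Ω be a measurable space, p_model a probability measure on Ω, E : Ω → ℝ measurable with E ≥ 0 everywhere, and λ ≥ 0. Define Z_λ = ∫ exp(−λ·E) dp_model and let p_guided be the measure with density exp(−λ·E)/Z_λ with respect to p_model. If p_data is a probability measure with p_data ≪ p_model, KL(p_data ‖ p_model) < ∞, and E = 0 holds p_data-almost everywhere (the real data satisfies the constraints), then KL(p_data ‖ p_guided) ≤ KL(p_data ‖ p_model). -/
open MeasureTheory Real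
open scoped ENNReal

/-- Kullback–Leibler divergence `∫ log (dp/dq) dp` of measures `p ≪ q`. -/
noncomputable def klDivergence {Ω : Type*} [MeasurableSpace Ω] (p q : Measure Ω) : ℝ :=
  ∫ ω, Real.log (p.rnDeriv q ω).toReal ∂p

theorem kl_guided_le_kl_model
    {Ω : Type*} [MeasurableSpace Ω]
    (p_model p_data : Measure Ω)
    [IsProbabilityMeasure p_model] [IsProbabilityMeasure p_data]
    (E : Ω → ℝ) (hE_meas : Measurable E) (hE_nonneg : ∀ ω, 0 ≤ E ω)
    (lam : ℝ) (hlam : 0 ≤ lam)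
    (Z : ℝ) (hZ : Z = ∫ ω, Real.exp (-lam * E ω) ∂p_model)
    (p_guided : Measure Ω)
    (hguided : p_guided =
      p_model.withDensity (fun ω => ENNReal.ofReal (Real.exp (-lam * E ω) / Z)))
    (hac : p_data ≪ p_model)
    (hKL_fin : Integrable (fun ω => Real.log (p_data.rnDeriv p_model ω).toReal) p_data)
    (hE_zero : ∀ᵐ ω ∂p_data, E ω = 0) :
    klDivergence p_data p_guided ≤ klDivergence p_data p_model := by
  have hmeas : Measurable fun ω => Real.exp (-lam * E ω) :=
    (hE_meas.const_mul (-lam)).exp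
  have hint : Integrable (fun ω => Real.exp (-lam * E ω)) p_model := by
    refine Integrable.mono' (integrable_const 1) hmeas.aestronglyMeasurable ?_
    filter_upwards with ω
    rw [Real.norm_eq_abs, abs_of_pos (Real.exp_pos _)]
    exact Real.exp_le_one_iff.2 (by nlinarith [hE_nonneg ω])
  have hZpos : 0 < Z := hZ ▸ integral_exp_pos hint
  have hZle : Z ≤ 1 := by
    rw [hZ]
    calc ∫ ω, Real.exp (-lam * E ω) ∂p_model ≤ ∫ _, (1:ℝ) ∂p_model := by
          refine integral_mono hint (integrable_const 1) fun ω => ?_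
          exact Real.exp_le_one_iff.2 (by nlinarith [hE_nonneg ω])
      _ = 1 := by simp
  set f : Ω → ℝ≥0∞ := fun ω => ENNReal.ofReal (Real.exp (-lam * E ω) / Z) with hf
  have hfpos : ∀ ω, 0 < Real.exp (-lam * E ω) / Z :=
    fun ω => div_pos (Real.exp_pos _) hZpos
  have hrn : p_data.rnDeriv p_guided =ᵐ[p_model]
      fun ω => (f ω)⁻¹ * p_data.rnDeriv p_model ω := by
    rw [hguided]
    refine Measure.rnDeriv_withDensity_right p_data p_model
      ((hmeas.div_const Z).ennreal_ofReal).aemeasurable ?_ ?_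
    · filter_upwards with ω
      simpa [hf] using (ENNReal.ofReal_pos.2 (hfpos ω)).ne'
    · filter_upwards with ω using ENNReal.ofReal_ne_top
  have key : (fun ω => Real.log (p_data.rnDeriv p_guided ω).toReal) =ᵐ[p_data]
      fun ω => Real.log Z + Real.log (p_data.rnDeriv p_model ω).toReal := by
    filter_upwards [hac.ae_eq hrn, hE_zero, Measure.rnDeriv_pos hac,
      hac.ae_le (Measure.rnDeriv_ne_top p_data p_model)] with ω h1 h2 h3 h4
    have hfω : f ω = ENNReal.ofReal (1 / Z) := by simp [hf, h2]
    have hfinv : (f ω)⁻¹ = ENNReal.ofReal Z := by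
      rw [hfω, one_div, ENNReal.ofReal_inv_of_pos hZpos, inv_inv]
    have htpos : 0 < (p_data.rnDeriv p_model ω).toReal :=
      ENNReal.toReal_pos h3.ne' h4
    rw [h1, hfinv, ENNReal.toReal_mul, ENNReal.toReal_ofReal hZpos.le,
      Real.log_mul hZpos.ne' htpos.ne']
  have hlogZ : Real.log Z ≤ 0 := Real.log_nonpos hZpos.le hZle
  calc klDivergence p_data p_guided
      = ∫ ω, (Real.log Z + Real.log (p_data.rnDeriv p_model ω).toReal) ∂p_data :=
        integral_congr_ae key
    _ = Real.log Z + klDivergence p_data p_model := by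
        rw [integral_add (integrable_const _) hKL_fin, integral_const]
        simp [klDivergence]
    _ ≤ klDivergence p_data p_model := by linarith
end

section
/- Let d be a positive natural number, k ≥ 0, σ > 0, and define f : EuclideanSpace ℝ (Fin d) → ℝ by f(x) = k·exp(−‖x‖²/σ²). Then f is differentiable everywhere, and for all x the operator norm of its derivative satisfies ‖Df(x)‖ = (2k·‖x‖/σ²)·exp(−‖x‖²/σ²) ≤ k·√2/(σ·√e), with equality at points with ‖x‖ = σ/√2. -/
/-! The derivative of `y ↦ k exp(-‖y‖²/σ²)` at `x` is `-(2k/σ²) exp(-‖x‖²/σ²) ⟪x, ·⟫`, whose norm is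
`(2|k|/σ²) · ‖x‖ exp(-‖x‖²/σ²)`. After the substitution `‖x‖ = (σ/√2) u`, bounding it reduces to
`u exp(-u²/2) ≤ exp(-1/2)`, which follows from `u ≤ exp(u - 1) ≤ exp((u² - 1)/2)`; equality holds
at `u = 1`. -/

open Real

theorem Real.mul_exp_neg_sq_div_two_le (u : ℝ) : u * exp (-u ^ 2 / 2) ≤ exp (-1 / 2) := by
  have hu : u ≤ exp ((u ^ 2 - 1) / 2) := calc
    u ≤ exp (u - 1) := by linarith [add_one_le_exp (u - 1)]
    _ ≤ exp ((u ^ 2 - 1) / 2) := exp_le_exp.mpr (by nlinarith [sq_nonneg (u - 1)])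
  calc u * exp (-u ^ 2 / 2) ≤ exp ((u ^ 2 - 1) / 2) * exp (-u ^ 2 / 2) := by gcongr
    _ = exp (-1 / 2) := by rw [← exp_add]; ring_nf

theorem Real.mul_exp_neg_sq_div_sq_le {σ : ℝ} (hσ : 0 < σ) (t : ℝ) :
    t * exp (-t ^ 2 / σ ^ 2) ≤ σ / √2 * exp (-1 / 2) := by
  have hsqrt2 : √2 ^ 2 = 2 := sq_sqrt zero_le_two
  have hexp : -t ^ 2 / σ ^ 2 = -(√2 * t / σ) ^ 2 / 2 := by field_simp; rw [hsqrt2]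
  calc t * exp (-t ^ 2 / σ ^ 2) = σ / √2 * ((√2 * t / σ) * exp (-(√2 * t / σ) ^ 2 / 2)) := by
        rw [hexp]; field_simp
    _ ≤ σ / √2 * exp (-1 / 2) := by gcongr; exact mul_exp_neg_sq_div_two_le _

theorem Real.div_sqrt_two_mul_exp_neg_sq_div_sq {σ : ℝ} (hσ : σ ≠ 0) :
    σ / √2 * exp (-(σ / √2) ^ 2 / σ ^ 2) = σ / √2 * exp (-1 / 2) := by
  have hsqrt2 : √2 ^ 2 = 2 := sq_sqrt zero_le_two
  rw [div_pow, hsqrt2]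
  field_simp

theorem Real.two_mul_div_sq_mul_div_sqrt_two_mul_exp_neg_half {σ : ℝ} (hσ : σ ≠ 0) (k : ℝ) :
    2 * k / σ ^ 2 * (σ / √2 * exp (-1 / 2)) = k * √2 / (σ * √(exp 1)) := by
  have hsqrt2 : √2 ^ 2 = 2 := sq_sqrt zero_le_two
  have hexp : exp (-1 / 2) = (√(exp 1))⁻¹ := by
    rw [← exp_half, ← exp_neg]; ring_nf
  have : √(exp 1) ≠ 0 := (sqrt_pos.mpr (exp_pos 1)).ne'
  rw [hexp]
  field_simp
  rw [hsqrt2]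
  ring

section Gaussian

variable {E : Type*} [NormedAddCommGroup E] [InnerProductSpace ℝ E]

theorem hasFDerivAt_const_mul_exp_neg_norm_sq_div_sq (k σ : ℝ) (x : E) :
    HasFDerivAt (fun y : E => k * exp (-‖y‖ ^ 2 / σ ^ 2))
      ((-(2 * k / σ ^ 2) * exp (-‖x‖ ^ 2 / σ ^ 2)) • innerSL ℝ x) x := by
  have hexponent : HasFDerivAt (fun y : E => -‖y‖ ^ 2 / σ ^ 2) ((-2 / σ ^ 2) • innerSL ℝ x) x := by
    have := (hasStrictFDerivAt_norm_sq x).hasFDerivAt.const_mul (-1 / σ ^ 2)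
    rw [two_smul ℕ, ← two_smul ℝ, smul_smul] at this
    refine (this.congr_fderiv ?_).congr_of_eventuallyEq (.of_forall fun y => ?_) <;> ring_nf
  refine (((hasDerivAt_exp _).comp_hasFDerivAt x hexponent).const_mul k).congr_fderiv ?_
  rw [smul_smul, smul_smul]
  ring_nf

theorem norm_fderiv_const_mul_exp_neg_norm_sq_div_sq (k σ : ℝ) (x : E) :
    ‖fderiv ℝ (fun y : E => k * exp (-‖y‖ ^ 2 / σ ^ 2)) x‖ =
      2 * |k| / σ ^ 2 * (‖x‖ * exp (-‖x‖ ^ 2 / σ ^ 2)) := by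
  rw [(hasFDerivAt_const_mul_exp_neg_norm_sq_div_sq k σ x).fderiv, norm_smul, innerSL_apply_norm,
    norm_mul, norm_neg, norm_div, norm_mul, Real.norm_of_nonneg (exp_pos _).le, norm_two,
    Real.norm_eq_abs, Real.norm_of_nonneg (sq_nonneg σ)]
  ring

end Gaussian

theorem smooth_collision_energy_gradient_bound_general
    (d : ℕ)
    (k σ : ℝ) (hk : 0 ≤ k) (hσ : 0 < σ)
    (f : EuclideanSpace ℝ (Fin d) → ℝ)
    (hf : ∀ x, f x = k * Real.exp (-‖x‖ ^ 2 / σ ^ 2)) :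
    Differentiable ℝ f ∧
      (∀ x, ‖fderiv ℝ f x‖ = (2 * k * ‖x‖ / σ ^ 2) * Real.exp (-‖x‖ ^ 2 / σ ^ 2)) ∧
      (∀ x, ‖fderiv ℝ f x‖ ≤ k * Real.sqrt 2 / (σ * Real.sqrt (Real.exp 1))) ∧
      (∀ x, ‖x‖ = σ / Real.sqrt 2 →
        ‖fderiv ℝ f x‖ = k * Real.sqrt 2 / (σ * Real.sqrt (Real.exp 1))) := by
  obtain rfl : f = fun y => k * exp (-‖y‖ ^ 2 / σ ^ 2) := funext hf
  have hnorm := norm_fderiv_const_mul_exp_neg_norm_sq_div_sq (E := EuclideanSpace ℝ (Fin d)) k σ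
  simp only [abs_of_nonneg hk] at hnorm
  have hpeak := two_mul_div_sq_mul_div_sqrt_two_mul_exp_neg_half hσ.ne' k
  refine ⟨fun x => (hasFDerivAt_const_mul_exp_neg_norm_sq_div_sq k σ x).differentiableAt,
    fun x => by rw [hnorm]; ring, fun x => ?_, fun x hx => ?_⟩
  · rw [hnorm, ← hpeak]
    exact mul_le_mul_of_nonneg_left (mul_exp_neg_sq_div_sq_le hσ ‖x‖) (by positivity)
  · rw [hnorm, ← hpeak, hx, div_sqrt_two_mul_exp_neg_sq_div_sq hσ.ne']

theorem smooth_collision_energy_gradient_bound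
    (d : ℕ) (hd : 0 < d)
    (k σ : ℝ) (hk : 0 ≤ k) (hσ : 0 < σ)
    (f : EuclideanSpace ℝ (Fin d) → ℝ)
    (hf : ∀ x, f x = k * Real.exp (-‖x‖ ^ 2 / σ ^ 2)) :
    Differentiable ℝ f ∧
      (∀ x, ‖fderiv ℝ f x‖ = (2 * k * ‖x‖ / σ ^ 2) * Real.exp (-‖x‖ ^ 2 / σ ^ 2)) ∧
      (∀ x, ‖fderiv ℝ f x‖ ≤ k * Real.sqrt 2 / (σ * Real.sqrt (Real.exp 1))) ∧
      (∀ x, ‖x‖ = σ / Real.sqrt 2 →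
        ‖fderiv ℝ f x‖ = k * Real.sqrt 2 / (σ * Real.sqrt (Real.exp 1))) :=
  smooth_collision_energy_gradient_bound_general d k σ hk hσ f hf
end
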